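/- There exists a constant c > 0 with the following property. Let X, Y be real with 3/2 ≤ X ≤ Y and set Q = (1/2)√(XY). Let α ∈ ℝ, and let a ∈ ℤ and q ∈ ℕ, q ≥ 1, be coprime with |qα − a| ≤ Q/(XY). Then |g_q(α)| ≤ c·(X + q)·log q. -/

import Mathlib

/-!
Write `‖β‖ = |β - round β|` for the distance to the nearest integer. Summing over `y` first,
each row of `g_q(α)` is a pair of conjugate geometric series, of size at most `‖αx‖⁻¹`.
Since `|x| ≤ X ≤ √(XY)`, the hypothesis on `a/q` gives `|αx - ax/q| ≤ 1/(2q)`, while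
`‖ax/q‖ ≥ 1/q` when `q ∤ x`; hence `‖αx‖⁻¹ ≤ 2‖ax/q‖⁻¹`. As `x` runs over `[-X, X]`,
`ax` hits each residue class mod `q` at most `2X/q + 1` times, and
`∑_{0 ≤ r < q} ‖r/q‖⁻¹ ≤ 2q(1 + log q)` by comparison with the harmonic series.
-/

open Real

/-- The exponential sum `g_q(α) = ∑_{0 < |x| ≤ X, q ∤ x} ∑_{0 < |y| ≤ Y} e(αxy)`. -/
noncomputable def g (X Y : ℝ) (q : ℕ) (α : ℝ) : ℂ :=
  ∑ x ∈ Finset.Icc (-⌊X⌋) ⌊X⌋, ∑ y ∈ Finset.Icc (-⌊Y⌋) ⌊Y⌋,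
    if x ≠ 0 ∧ ¬ (q : ℤ) ∣ x ∧ y ≠ 0 then
      Complex.exp (2 * Real.pi * Complex.I * (α * x * y : ℝ)) else 0

open Finset

theorem abs_sub_round_le_abs_sub_round_add (β γ : ℝ) :
    |γ - round γ| ≤ |β - round β| + |γ - β| :=
  calc |γ - round γ| ≤ |γ - round β| := round_le γ (round β)
    _ ≤ |γ - β| + |β - round β| := abs_sub_le _ _ _
    _ = _ := add_comm _ _

theorem inv_natCast_le_abs_div_sub_round {q : ℕ} {k : ℤ} (hk : ¬ (q : ℤ) ∣ k) :
    (q : ℝ)⁻¹ ≤ |(k : ℝ) / q - round ((k : ℝ) / q)| := by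
  rcases Nat.eq_zero_or_pos q with rfl | hq
  · simp
  set n := round ((k : ℝ) / q)
  have hkn : k - n * q ≠ 0 := fun h => hk ⟨n, by linarith⟩
  have hone : (1 : ℝ) ≤ |(k : ℝ) - n * q| := by exact_mod_cast Int.one_le_abs hkn
  have hq' : (0 : ℝ) < q := by exact_mod_cast hq
  rw [show (k : ℝ) / q - n = ((k : ℝ) - n * q) / q by field_simp, abs_div, abs_of_pos hq',
    inv_eq_one_div]
  gcongr

theorem periodic_inv_abs_div_sub_round (q : ℕ) :
    Function.Periodic (fun k : ℤ => |(k : ℝ) / q - round ((k : ℝ) / q)|⁻¹) q := by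
  intro k
  rcases Nat.eq_zero_or_pos q with rfl | hq
  · simp
  have hshift : ((k + q : ℤ) : ℝ) / q = (k : ℝ) / q + 1 := by
    push_cast; field_simp
  dsimp only
  rw [hshift, round_add_one, Int.cast_add, Int.cast_one, add_sub_add_right_eq_sub]

theorem inv_min_le_inv_add_inv {K : Type*} [Field K] [LinearOrder K] [IsStrictOrderedRing K]
    {a b : K} (ha : 0 ≤ a) (hb : 0 ≤ b) : (min a b)⁻¹ ≤ a⁻¹ + b⁻¹ := by
  rcases min_cases a b with ⟨h, _⟩ | ⟨h, _⟩ <;> rw [h]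
  · exact le_add_of_nonneg_right (inv_nonneg.mpr hb)
  · exact le_add_of_nonneg_left (inv_nonneg.mpr ha)

theorem sum_range_inv_abs_div_sub_round_le (q : ℕ) :
    ∑ n ∈ range q, |(n : ℝ) / q - round ((n : ℝ) / q)|⁻¹ ≤ 2 * q * (1 + log q) := by
  rcases q with _ | m
  · simp
  set q := m + 1
  have hterm : ∀ n ∈ range q, |(n : ℝ) / q - round ((n : ℝ) / q)|⁻¹ ≤
      q * ((n : ℝ)⁻¹ + ((q - n : ℕ) : ℝ)⁻¹) := fun n hn => by
    have hnq : n % q = n := Nat.mod_eq_of_lt (mem_range.mp hn)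
    rw [abs_sub_round_div_natCast_eq, hnq, inv_div, div_eq_mul_inv, Nat.cast_min]
    gcongr
    exact inv_min_le_inv_add_inv (Nat.cast_nonneg _) (Nat.cast_nonneg _)
  have hlow : ∑ n ∈ range q, (n : ℝ)⁻¹ ≤ harmonic q := by
    rw [sum_range_succ', harmonic_succ]
    push_cast [harmonic]
    simp only [inv_zero, add_zero]
    linarith [inv_nonneg.mpr (by positivity : (0 : ℝ) ≤ m + 1)]
  have hhigh : ∑ n ∈ range q, ((q - n : ℕ) : ℝ)⁻¹ = harmonic q := by
    rw [← sum_range_reflect, harmonic]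
    push_cast
    refine sum_congr rfl fun n hn => ?_
    rw [show q - (q - 1 - n) = n + 1 by simp at hn; omega]
    push_cast; rfl
  calc _ ≤ ∑ n ∈ range q, q * ((n : ℝ)⁻¹ + ((q - n : ℕ) : ℝ)⁻¹) := sum_le_sum hterm
    _ = q * (∑ n ∈ range q, (n : ℝ)⁻¹ + ∑ n ∈ range q, ((q - n : ℕ) : ℝ)⁻¹) := by
        rw [← mul_sum, sum_add_distrib]
    _ ≤ q * (2 * harmonic q) := by rw [hhigh]; gcongr; linarith
    _ ≤ 2 * q * (1 + log q) := by
        have := harmonic_le_one_add_log q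
        nlinarith [(by positivity : (0 : ℝ) ≤ q)]

theorem four_mul_abs_sub_round_le_norm_exp_sub_one (β : ℝ) :
    4 * |β - round β| ≤ ‖Complex.exp (2 * π * Complex.I * β) - 1‖ := by
  set t := β - round β
  have hexp : Complex.exp (2 * π * Complex.I * β) =
      Complex.exp (Complex.I * (2 * π * t : ℝ)) := by
    rw [show (β : ℂ) = t + round β by simp [t], mul_add, mul_comm _ (round β : ℂ),
      Complex.exp_add, Complex.exp_int_mul_two_pi_mul_I, mul_one]
    push_cast; ring_nf
  have hjordan : 2 / π * |π * t| ≤ |Real.sin (π * t)| :=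
    mul_abs_le_abs_sin (by rw [abs_mul, abs_of_pos pi_pos]; nlinarith [abs_sub_round β, pi_pos])
  calc 4 * |t| = 2 * (2 / π * |π * t|) := by
        rw [abs_mul, abs_of_pos pi_pos]; field_simp; ring
    _ ≤ 2 * |Real.sin (π * t)| := by gcongr
    _ = _ := by
        rw [hexp, Complex.norm_exp_I_mul_ofReal_sub_one, norm_mul, Real.norm_eq_abs,
          Real.norm_eq_abs, abs_two]
        ring_nf

theorem norm_geom_sum_le {𝕜 : Type*} [NormedField 𝕜] {z : 𝕜} (hz : ‖z‖ ≤ 1) (hz1 : z ≠ 1)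
    (n : ℕ) : ‖∑ i ∈ range n, z ^ i‖ ≤ 2 / ‖z - 1‖ := by
  rw [geom_sum_eq hz1, norm_div]
  gcongr
  calc ‖z ^ n - 1‖ ≤ ‖z ^ n‖ + ‖(1 : 𝕜)‖ := norm_sub_le _ _
    _ ≤ 1 + 1 := by
        rw [norm_pow, norm_one]
        gcongr
        exact pow_le_one₀ (norm_nonneg z) hz
    _ = 2 := by norm_num

theorem sum_Icc_filter_ne_zero_eq {M : Type*} [AddCommMonoid M] (f : ℤ → M) (N : ℕ) :
    ∑ y ∈ Icc (-(N : ℤ)) N with y ≠ 0, f y =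
      ∑ n ∈ range N, (f (n + 1) + f (-(n + 1))) := by
  induction N with
  | zero => rfl
  | succ N ih =>
    rw [sum_range_succ, ← ih]
    have hset : {y ∈ Icc (-((N + 1 : ℕ) : ℤ)) (N + 1 : ℕ) | y ≠ 0} =
        insert ((N : ℤ) + 1) (insert (-((N : ℤ) + 1)) {y ∈ Icc (-(N : ℤ)) N | y ≠ 0}) := by
      ext y; simp only [mem_filter, mem_Icc, mem_insert]; push_cast; omega
    rw [hset, sum_insert (by simp only [mem_insert, mem_filter, mem_Icc]; omega),
      sum_insert (by simp only [mem_filter, mem_Icc]; omega)]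
    abel

theorem norm_sum_exp_punctured_le {β : ℝ} (hβ : 0 < |β - round β|) (M : ℕ) :
    ‖∑ y ∈ Icc (-(M : ℤ)) M with y ≠ 0, Complex.exp (2 * π * Complex.I * (β * y : ℝ))‖ ≤
      |β - round β|⁻¹ := by
  set z := Complex.exp (2 * π * Complex.I * β)
  have hz : ‖z‖ = 1 := by simp [z, Complex.norm_exp]
  have hdist : 4 * |β - round β| ≤ ‖z - 1‖ := four_mul_abs_sub_round_le_norm_exp_sub_one β
  have hz1 : z ≠ 1 := by
    rintro h
    rw [h, sub_self, norm_zero] at hdist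
    linarith
  set T := ∑ n ∈ range M, z ^ (n + 1)
  have hsum : ∑ y ∈ Icc (-(M : ℤ)) M with y ≠ 0,
      Complex.exp (2 * π * Complex.I * (β * y : ℝ)) = T + starRingEnd ℂ T := by
    rw [sum_Icc_filter_ne_zero_eq, map_sum, ← sum_add_distrib]
    refine sum_congr rfl fun n _ => ?_
    rw [← Complex.exp_nat_mul, ← Complex.exp_conj]
    congr 2 <;> simp [Complex.conj_ofReal, map_ofNat] <;> ring
  have hT : ‖T‖ ≤ 2 / ‖z - 1‖ := by
    simp_rw [T, pow_succ, ← sum_mul, norm_mul, hz, mul_one]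
    exact norm_geom_sum_le hz.le hz1 M
  calc _ = ‖T + starRingEnd ℂ T‖ := by rw [hsum]
    _ ≤ ‖T‖ + ‖T‖ := by simpa using norm_add_le T (starRingEnd ℂ T)
    _ ≤ 2 / ‖z - 1‖ + 2 / ‖z - 1‖ := by gcongr
    _ ≤ 2 / (4 * |β - round β|) + 2 / (4 * |β - round β|) := by gcongr
    _ = |β - round β|⁻¹ := by field_simp; norm_num

theorem card_le_of_subset_Icc_of_modEq {S : Finset ℤ} {lo hi : ℤ} {q : ℕ} (hq : 0 < q)
    (hlo : lo ≤ hi) (hS : S ⊆ Icc lo hi) (hmod : ∀ x ∈ S, ∀ y ∈ S, x ≡ y [ZMOD q]) :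
    (#S : ℝ) ≤ ((hi : ℝ) - lo) / q + 1 := by
  have hq' : (0 : ℤ) < q := by exact_mod_cast hq
  set K := (hi - lo) / (q : ℤ)
  have hK : 0 ≤ K := Int.ediv_nonneg (by omega) hq'.le
  have hinj : Set.InjOn (fun x => (x - lo) / (q : ℤ)) S := by
    intro x hx y hy hxy
    have hrem : (x - lo) % q = (y - lo) % q := (hmod x hx y hy).sub_right lo
    have hx' := Int.emod_add_mul_ediv (x - lo) q
    have hy' := Int.emod_add_mul_ediv (y - lo) q
    simp only at hxy
    rw [hxy, hrem] at hx'
    linarith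
  have hmaps : Set.MapsTo (fun x => (x - lo) / (q : ℤ)) S (Icc 0 K) := by
    intro x hx
    have := mem_Icc.mp (hS hx)
    simp only [coe_Icc, Set.mem_Icc]
    exact ⟨Int.ediv_nonneg (by omega) hq'.le, Int.ediv_le_ediv hq' (by omega)⟩
  have hcard : (#S : ℤ) ≤ K + 1 := by
    have := card_le_card_of_injOn _ hmaps hinj
    rw [Int.card_Icc] at this
    omega
  have hKq : (K : ℝ) * q ≤ (hi : ℝ) - lo := by
    exact_mod_cast Int.ediv_mul_le (hi - lo) hq'.ne'
  have : (K : ℝ) ≤ ((hi : ℝ) - lo) / q := by rwa [le_div_iff₀ (by exact_mod_cast hq)]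
  have : (#S : ℝ) ≤ K + 1 := by exact_mod_cast hcard
  linarith

theorem sum_Icc_comp_mul_le_mul_sum_range {q : ℕ} (hq : 0 < q) {a : ℤ} (ha : IsCoprime a q)
    {f : ℤ → ℝ} (hf0 : ∀ k, 0 ≤ f k) (hf : Function.Periodic f q) {lo hi : ℤ}
    (hlo : lo ≤ hi) :
    ∑ x ∈ Icc lo hi, f (a * x) ≤ (((hi : ℝ) - lo) / q + 1) * ∑ n ∈ range q, f n := by
  have hq' : (0 : ℤ) < q := by exact_mod_cast hq
  set r : ℤ → ℕ := fun x => ((a * x) % q).toNat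
  have hr : ∀ x, (r x : ℤ) = (a * x) % q := fun x =>
    Int.toNat_of_nonneg (Int.emod_nonneg _ hq'.ne')
  have hmaps : ∀ x ∈ Icc lo hi, r x ∈ range q := fun x _ => by
    have := Int.emod_lt_of_pos (a * x) hq'
    have := hr x
    rw [mem_range]; omega
  have hfr : ∀ x, f (a * x) = f (r x) := fun x => by
    rw [hr, Int.emod_def, ← hf.sub_zsmul_eq (a * x / q), smul_eq_mul, mul_comm (a * x / q)]
  have hfiber : ∀ n ∈ range q,
      (#{x ∈ Icc lo hi | r x = n} : ℝ) ≤ ((hi : ℝ) - lo) / q + 1 :=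
    fun n _ => card_le_of_subset_Icc_of_modEq hq hlo (filter_subset _ _) fun x hx y hy => by
      have hxy : a * x ≡ a * y [ZMOD q] := by
        unfold Int.ModEq; rw [← hr, ← hr, (mem_filter.mp hx).2, (mem_filter.mp hy).2]
      exact Int.modEq_of_dvd (ha.symm.dvd_of_dvd_mul_left (by simpa [mul_sub] using hxy.dvd))
  calc ∑ x ∈ Icc lo hi, f (a * x)
      = ∑ n ∈ range q, ∑ x ∈ Icc lo hi with r x = n, f n := by
        rw [← sum_fiberwise_of_maps_to hmaps]
        refine sum_congr rfl fun n _ => sum_congr rfl fun x hx => ?_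
        rw [hfr, (mem_filter.mp hx).2]
    _ = ∑ n ∈ range q, (#{x ∈ Icc lo hi | r x = n} : ℝ) * f n := by
        simp_rw [sum_const, nsmul_eq_mul]
    _ ≤ ∑ n ∈ range q, (((hi : ℝ) - lo) / q + 1) * f n :=
        sum_le_sum fun n hn => mul_le_mul_of_nonneg_right (hfiber n hn) (hf0 n)
    _ = _ := (mul_sum _ _ _).symm

theorem abs_mul_le_half_of_abs_le {X Y t δ : ℝ} (hX : 0 < X) (hXY : X ≤ Y) (ht : |t| ≤ X)
    (hδ : |δ| ≤ √(X * Y) / 2 / (X * Y)) : |t * δ| ≤ 1 / 2 := by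
  set s := √(X * Y)
  have hXs : X ≤ s := le_sqrt_of_sq_le (by nlinarith)
  have hss : s * s = X * Y := mul_self_sqrt (mul_pos hX (hX.trans_le hXY)).le
  have hs : 0 < s := hX.trans_le hXs
  calc |t * δ| = |t| * |δ| := abs_mul t δ
    _ ≤ s * (s / 2 / (s * s)) := by rw [hss]; gcongr; exact ht.trans hXs
    _ = 1 / 2 := by field_simp

theorem norm_sum_exp_punctured_le_of_rat_approx {q : ℕ} (hq : 0 < q) {a x : ℤ}
    (hk : ¬ (q : ℤ) ∣ a * x) {α : ℝ} (happ : |(x : ℝ) * (q * α - a)| ≤ 1 / 2) (M : ℕ) :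
    ‖∑ y ∈ Icc (-(M : ℤ)) M with y ≠ 0, Complex.exp (2 * π * Complex.I * (α * x * y : ℝ))‖ ≤
      2 * |((a * x : ℤ) : ℝ) / q - round (((a * x : ℤ) : ℝ) / q)|⁻¹ := by
  set δ := |((a * x : ℤ) : ℝ) / q - round (((a * x : ℤ) : ℝ) / q)|
  have hq' : (0 : ℝ) < q := by exact_mod_cast hq
  have hδ : (q : ℝ)⁻¹ ≤ δ := inv_natCast_le_abs_div_sub_round hk
  have hclose : |((a * x : ℤ) : ℝ) / q - α * x| ≤ (q : ℝ)⁻¹ / 2 := by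
    rw [show ((a * x : ℤ) : ℝ) / q - α * x = -((x * (q * α - a)) / q) by
        push_cast; field_simp; ring,
      abs_neg, abs_div, abs_of_pos hq']
    calc _ ≤ (1 / 2) / (q : ℝ) := by gcongr
      _ = _ := by ring
  have hhalf : δ / 2 ≤ |α * x - round (α * x)| := by
    linarith [abs_sub_round_le_abs_sub_round_add (α * x) (((a * x : ℤ) : ℝ) / q)]
  have hpos : 0 < δ / 2 := by linarith [inv_pos.mpr hq']
  calc _ ≤ |α * x - round (α * x)|⁻¹ := norm_sum_exp_punctured_le (hpos.trans_le hhalf) M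
    _ ≤ (δ / 2)⁻¹ := inv_anti₀ hpos hhalf
    _ = 2 * δ⁻¹ := by rw [inv_div, div_eq_mul_inv]

theorem norm_inner_sum_g_le {X Y α : ℝ} {a : ℤ} {q : ℕ} (hq : 0 < q) (ha : IsCoprime a q)
    (hX : 0 < X) (hXY : X ≤ Y) (happ : |(q : ℝ) * α - a| ≤ √(X * Y) / 2 / (X * Y)) {x : ℤ}
    (hx : x ∈ Icc (-⌊X⌋) ⌊X⌋) :
    ‖∑ y ∈ Icc (-⌊Y⌋) ⌊Y⌋, if x ≠ 0 ∧ ¬ (q : ℤ) ∣ x ∧ y ≠ 0 then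
        Complex.exp (2 * π * Complex.I * (α * x * y : ℝ)) else 0‖ ≤
      2 * |((a * x : ℤ) : ℝ) / q - round (((a * x : ℤ) : ℝ) / q)|⁻¹ := by
  by_cases hqx : (q : ℤ) ∣ x
  · simp only [hqx, not_true_eq_false, false_and, and_false, if_false, sum_const_zero,
      norm_zero]
    positivity
  have hx0 : x ≠ 0 := by rintro rfl; exact hqx (dvd_zero _)
  have hxX : |(x : ℝ)| ≤ X :=
    calc |(x : ℝ)| = ((|x| : ℤ) : ℝ) := Int.cast_abs.symm
      _ ≤ ⌊X⌋ := by exact_mod_cast abs_le.mpr (mem_Icc.mp hx)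
      _ ≤ X := Int.floor_le X
  rw [← sum_filter, ← Int.natCast_floor_eq_floor (by linarith : (0 : ℝ) ≤ Y)]
  simp only [ne_eq, hx0, hqx, not_false_eq_true, true_and]
  exact norm_sum_exp_punctured_le_of_rat_approx hq (fun h => hqx (ha.symm.dvd_of_dvd_mul_left h))
    (abs_mul_le_half_of_abs_le hX hXY hxX happ) _

theorem stmt7 :
    ∃ c > 0, ∀ X Y α : ℝ, ∀ a : ℤ, ∀ q : ℕ, 3 / 2 ≤ X → X ≤ Y → 1 ≤ q →
      Int.gcd a q = 1 → |(q : ℝ) * α - a| ≤ (Real.sqrt (X * Y) / 2) / (X * Y) →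
      ‖g X Y q α‖ ≤ c * (X + q) * Real.log q := by
  refine ⟨24, by norm_num, fun X Y α a q hX hXY hq hgcd happ => ?_⟩
  obtain rfl | hq2 := hq.eq_or_lt
  · simp [g]
  have hq0 : 0 < q := by omega
  have hcop : IsCoprime a q := Int.isCoprime_iff_gcd_eq_one.mpr hgcd
  set ψ : ℤ → ℝ := fun k => |(k : ℝ) / q - round ((k : ℝ) / q)|⁻¹
  have hlog : 1 / 2 < log q := by
    have : log 2 ≤ log q := log_le_log (by norm_num) (by exact_mod_cast hq2)
    linarith [log_two_gt_d9]
  calc ‖g X Y q α‖ ≤ ∑ x ∈ Icc (-⌊X⌋) ⌊X⌋, 2 * ψ (a * x) :=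
        (norm_sum_le _ _).trans <| sum_le_sum fun x hx =>
          norm_inner_sum_g_le hq0 hcop (by linarith) hXY happ hx
    _ ≤ 2 * (((⌊X⌋ : ℝ) - (-⌊X⌋ : ℤ)) / q + 1) * ∑ n ∈ range q, ψ n := by
        rw [← mul_sum, mul_assoc]
        gcongr
        exact sum_Icc_comp_mul_le_mul_sum_range hq0 hcop (fun k => by positivity)
          (periodic_inv_abs_div_sub_round q) (neg_le_self (Int.floor_nonneg.mpr (by linarith)))
    _ ≤ 2 * (2 * X / q + 1) * (2 * q * (1 + log q)) := by
        gcongr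
        · push_cast
          linarith [Int.floor_le X]
        · exact sum_range_inv_abs_div_sub_round_le q
    _ = 4 * (2 * X + q) * (1 + log q) := by field_simp; ring
    _ ≤ 24 * (X + q) * log q := by nlinarith
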